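/- arXiv:2109.05111 — 6 statements merged into one kernel-verified Lean document; each statement's English description precedes it below -/
import Mathlib

section
/- Let C be an additive category in which every morphism has a pseudokernel and a pseudocokernel, and let B be a full subcategory of C. If B is coreflective, then B is precovering, closed under taking direct summands, and every morphism between objects of B has a pseudocokernel in C that belongs to B. Conversely, if moreover C has split idempotents, then any full subcategory B that is precovering, closed under taking direct summands, and such that every morphism between objects of B has a pseudocokernel in C belonging to B, is coreflective. -/
open CategoryTheory Limits

universe w v u

namespace PaperStmt

variable {C : Type u} [Category.{v} C]

/-- The subcategory (object property) `B` is closed under isomorphisms. -/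
def ClosedUnderIso (B : C → Prop) : Prop :=
  ∀ ⦃X Y : C⦄, (X ≅ Y) → B X → B Y

/-- `B` is closed under direct summands (retracts). -/
def ClosedUnderSummands (B : C → Prop) : Prop :=
  ∀ ⦃X Y : C⦄, B X → (∃ (s : Y ⟶ X) (r : X ⟶ Y), s ≫ r = 𝟙 Y) → B Y

/-- `f : X ⟶ A` is a `B`-precover of `A`. -/
def IsPrecover (B : C → Prop) {X A : C} (f : X ⟶ A) : Prop :=
  B X ∧ ∀ ⦃Y : C⦄, B Y → ∀ g : Y ⟶ A, ∃ h : Y ⟶ X, h ≫ f = g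

/-- `B` is a precovering subcategory. -/
def Precovering (B : C → Prop) : Prop :=
  ∀ A : C, ∃ (X : C) (f : X ⟶ A), IsPrecover B f

/-- `f : A ⟶ X` is a `B`-preenvelope of `A`. -/
def IsPreenvelope (B : C → Prop) {A X : C} (f : A ⟶ X) : Prop :=
  B X ∧ ∀ ⦃Y : C⦄, B Y → ∀ g : A ⟶ Y, ∃ h : X ⟶ Y, f ≫ h = g

/-- `B` is a preenveloping subcategory. -/
def Preenveloping (B : C → Prop) : Prop :=
  ∀ A : C, ∃ (X : C) (f : A ⟶ X), IsPreenvelope B f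

/-- `f : X ⟶ A` is a `B`-coreflection of `A`. -/
def IsCoreflection (B : C → Prop) {X A : C} (f : X ⟶ A) : Prop :=
  B X ∧ ∀ ⦃Y : C⦄, B Y → ∀ g : Y ⟶ A, ∃! h : Y ⟶ X, h ≫ f = g

/-- `B` is a coreflective subcategory: the inclusion has a right adjoint. -/
def IsCoreflectiveSub (B : C → Prop) : Prop :=
  (ObjectProperty.ι B).IsLeftAdjoint

/-- `B` is a reflective subcategory: the inclusion has a left adjoint. -/
def IsReflectiveSub (B : C → Prop) : Prop :=
  (ObjectProperty.ι B).IsRightAdjoint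

section Zero

variable [HasZeroMorphisms C]

/-- `k` is a pseudokernel of `f`. -/
def IsPseudokernel {K X Y : C} (f : X ⟶ Y) (k : K ⟶ X) : Prop :=
  k ≫ f = 0 ∧ ∀ ⦃K' : C⦄ (k' : K' ⟶ X), k' ≫ f = 0 → ∃ t : K' ⟶ K, t ≫ k = k'

/-- `c` is a pseudocokernel of `f`. -/
def IsPseudocokernel {X Y Q : C} (f : X ⟶ Y) (c : Y ⟶ Q) : Prop :=
  f ≫ c = 0 ∧ ∀ ⦃Q' : C⦄ (c' : Y ⟶ Q'), f ≫ c' = 0 → ∃ t : Q ⟶ Q', c ≫ t = c'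

end Zero

/-- `C` has pseudokernels. -/
def HasPseudokernels (C : Type u) [Category.{v} C] [HasZeroMorphisms C] : Prop :=
  ∀ ⦃X Y : C⦄ (f : X ⟶ Y), ∃ (K : C) (k : K ⟶ X), IsPseudokernel f k

/-- `C` has pseudocokernels. -/
def HasPseudocokernels (C : Type u) [Category.{v} C] [HasZeroMorphisms C] : Prop :=
  ∀ ⦃X Y : C⦄ (f : X ⟶ Y), ∃ (Q : C) (c : Y ⟶ Q), IsPseudocokernel f c

end PaperStmt

namespace PaperStmt

/-!
Coreflections of `A` are the terminal objects of the comma category `ι B ↓ A`, so `B` is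
coreflective exactly when every object has a coreflection. A coreflection is a precover; a
retract of an object of `B` is isomorphic to its coreflection, because uniqueness of
factorizations forces a section of the coreflection to be its inverse; and lifting a
pseudocokernel through the coreflection of its target gives one with target in `B`.

Conversely, take a precover `f : X ⟶ A`, a pseudokernel `k` of `f`, a precover `g` of its
source and a pseudocokernel `c : X ⟶ Q` of `g ≫ k` with `Q` in `B`. Then `f = c ≫ φ`, and on
objects of `B` every morphism killed by `f` is killed by `c`. Lifting `φ` along `f` to
`s : Q ⟶ X` gives `c ≫ s ≫ c = c`, since `𝟙 - c ≫ s` is killed by `f`, hence by `c`. So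
`s ≫ c` is an idempotent fixing `φ`, and the summand of `Q` it splits off, followed by `φ`, is
a coreflection of `A`.
-/

section

variable {C : Type u} [Category.{v} C] {B : C → Prop}

lemma isCoreflection_of_isTerminal {A : C} {T : CostructuredArrow (ObjectProperty.ι B) A}
    (hT : IsTerminal T) : IsCoreflection B T.hom := by
  refine ⟨T.left.2, fun Y hY g => ?_⟩
  let G : CostructuredArrow (ObjectProperty.ι B) A :=
    CostructuredArrow.mk (Y := (⟨Y, hY⟩ : ObjectProperty.FullSubcategory B))
      (show (ObjectProperty.ι B).obj ⟨Y, hY⟩ ⟶ A from g)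
  refine ⟨(hT.from G).left.hom, CostructuredArrow.w (hT.from G), fun h hh => ?_⟩
  have : CostructuredArrow.homMk (ObjectProperty.homMk h) hh = hT.from G := hT.hom_ext _ _
  exact congrArg (fun m => m.left.hom) this

noncomputable def IsCoreflection.isTerminal {X A : C} {f : X ⟶ A} (hf : IsCoreflection B f) :
    IsTerminal (CostructuredArrow.mk (Y := (⟨X, hf.1⟩ : ObjectProperty.FullSubcategory B))
      (show (ObjectProperty.ι B).obj ⟨X, hf.1⟩ ⟶ A from f)) :=
  IsTerminal.ofUniqueHom
    (fun Z => CostructuredArrow.homMk (ObjectProperty.homMk (hf.2 Z.left.2 Z.hom).exists.choose)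
      (hf.2 Z.left.2 Z.hom).exists.choose_spec)
    (fun Z m => by
      ext
      exact (hf.2 Z.left.2 Z.hom).unique (CostructuredArrow.w m)
        (hf.2 Z.left.2 Z.hom).exists.choose_spec)

theorem isCoreflectiveSub_iff_forall_exists_isCoreflection :
    IsCoreflectiveSub B ↔ ∀ A : C, ∃ (X : C) (f : X ⟶ A), IsCoreflection B f := by
  rw [IsCoreflectiveSub, isLeftAdjoint_iff_hasTerminal_costructuredArrow]
  exact forall_congr' fun A =>
    ⟨fun _ => ⟨_, _, isCoreflection_of_isTerminal terminalIsTerminal⟩,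
      fun ⟨_, _, hf⟩ => (IsCoreflection.isTerminal hf).hasTerminal⟩

lemma IsCoreflection.isPrecover {X A : C} {f : X ⟶ A} (hf : IsCoreflection B f) :
    IsPrecover B f :=
  ⟨hf.1, fun _ hY g => (hf.2 hY g).exists⟩

lemma IsCoreflection.hom_ext {X A Y : C} {f : X ⟶ A} (hf : IsCoreflection B f) (hY : B Y)
    {h₁ h₂ : Y ⟶ X} (h : h₁ ≫ f = h₂ ≫ f) : h₁ = h₂ :=
  (hf.2 hY _).unique h rfl

lemma IsCoreflection.comp_eq_id_of_comp_eq_id {X A : C} {f : X ⟶ A} (hf : IsCoreflection B f)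
    {g : A ⟶ X} (hgf : g ≫ f = 𝟙 A) : f ≫ g = 𝟙 X :=
  hf.hom_ext hf.1 (by rw [Category.assoc, hgf, Category.comp_id, Category.id_comp])

lemma closedUnderSummands_of_forall_exists_isCoreflection (hiso : ClosedUnderIso B)
    (h : ∀ A : C, ∃ (X : C) (f : X ⟶ A), IsCoreflection B f) : ClosedUnderSummands B := by
  rintro X Y hX ⟨s, r, hsr⟩
  obtain ⟨W, f, hf⟩ := h Y
  obtain ⟨r', hr'⟩ := (hf.2 hX r).exists
  have hsection : (s ≫ r') ≫ f = 𝟙 Y := by rw [Category.assoc, hr', hsr]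
  exact hiso ⟨f, s ≫ r', hf.comp_eq_id_of_comp_eq_id hsection, hsection⟩ hf.1

lemma IsCoreflection.isPseudocokernel_lift [HasZeroMorphisms C] {X Y Q₀ Q : C}
    {f : X ⟶ Y} {c₀ : Y ⟶ Q₀} {ε : Q ⟶ Q₀} {c : Y ⟶ Q} (hε : IsCoreflection B ε) (hX : B X)
    (hc₀ : IsPseudocokernel f c₀) (hc : c ≫ ε = c₀) : IsPseudocokernel f c := by
  refine ⟨hε.hom_ext hX ?_, fun Q' c' hc' => ?_⟩
  · rw [Category.assoc, hc, hc₀.1, zero_comp]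
  · obtain ⟨t, ht⟩ := hc₀.2 c' hc'
    exact ⟨ε ≫ t, by rw [← Category.assoc, hc, ht]⟩

lemma IsPrecover.of_comp {X Q A : C} {c : X ⟶ Q} {φ : Q ⟶ A} (hf : IsPrecover B (c ≫ φ))
    (hQ : B Q) : IsPrecover B φ := by
  refine ⟨hQ, fun Y hY g => ?_⟩
  obtain ⟨h, hh⟩ := hf.2 hY g
  exact ⟨h ≫ c, by rw [Category.assoc, hh]⟩

lemma comp_eq_zero_of_isPseudokernel_of_isPrecover [HasZeroMorphisms C] {X A K X' Q Y : C}
    {f : X ⟶ A} {k : K ⟶ X} {g : X' ⟶ K} {c : X ⟶ Q} (hk : IsPseudokernel f k)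
    (hg : IsPrecover B g) (hc : (g ≫ k) ≫ c = 0) (hY : B Y) {u : Y ⟶ X} (hu : u ≫ f = 0) :
    u ≫ c = 0 := by
  obtain ⟨v, rfl⟩ := hk.2 u hu
  obtain ⟨w, rfl⟩ := hg.2 hY v
  simp only [Category.assoc] at hc ⊢
  rw [hc, comp_zero]

section Preadditive

variable [Preadditive C]

lemma comp_comp_eq_self_of_factorization {X Q A : C} {f : X ⟶ A} {c : X ⟶ Q} {φ : Q ⟶ A}
    {s : Q ⟶ X} (hX : B X) (hcφ : c ≫ φ = f) (hs : s ≫ f = φ)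
    (hker : ∀ ⦃Y : C⦄, B Y → ∀ u : Y ⟶ X, u ≫ f = 0 → u ≫ c = 0) : c ≫ s ≫ c = c := by
  have h := hker hX (𝟙 X - c ≫ s) (by
    rw [Preadditive.sub_comp, Category.id_comp, Category.assoc, hs, hcφ, sub_self])
  rw [Preadditive.sub_comp, Category.id_comp, Category.assoc, sub_eq_zero] at h
  exact h.symm

lemma isCoreflection_comp_of_split {Q Q' A : C} {φ : Q ⟶ A} {i : Q' ⟶ Q} {p : Q ⟶ Q'}
    (hφ : IsPrecover B φ) (hQ' : B Q') (hip : i ≫ p = 𝟙 Q') (hφe : (p ≫ i) ≫ φ = φ)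
    (hker : ∀ ⦃Y : C⦄, B Y → ∀ t : Y ⟶ Q, t ≫ φ = 0 → t ≫ p ≫ i = 0) :
    IsCoreflection B (i ≫ φ) := by
  refine ⟨hQ', fun Y hY g => ?_⟩
  obtain ⟨h, rfl⟩ := hφ.2 hY g
  refine ⟨h ≫ p, by simp only [Category.assoc] at hφe ⊢; rw [hφe], fun t ht => ?_⟩
  have hdiff := hker hY (t ≫ i - h)
    (by rw [Preadditive.sub_comp, Category.assoc, ht, sub_self])
  simpa [hip, reassoc_of% hip, sub_eq_zero] using hdiff =≫ p

theorem exists_isCoreflection_of_precovering [IsIdempotentComplete C]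
    (hpk : HasPseudokernels C) (hpre : Precovering B) (hsum : ClosedUnderSummands B)
    (hpcB : ∀ ⦃X Y : C⦄, B X → B Y → ∀ f : X ⟶ Y,
      ∃ (Q : C) (c : Y ⟶ Q), B Q ∧ IsPseudocokernel f c) (A : C) :
    ∃ (X : C) (f : X ⟶ A), IsCoreflection B f := by
  obtain ⟨X, f, hf⟩ := hpre A
  obtain ⟨K, k, hk⟩ := hpk f
  obtain ⟨X', g, hg⟩ := hpre K
  obtain ⟨Q, c, hQ, hc⟩ := hpcB hg.1 hf.1 (g ≫ k)
  obtain ⟨φ, hcφ⟩ := hc.2 f (by rw [Category.assoc, hk.1, comp_zero])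
  obtain ⟨s, hs⟩ := hf.2 hQ φ
  have hker : ∀ ⦃Y : C⦄, B Y → ∀ u : Y ⟶ X, u ≫ f = 0 → u ≫ c = 0 :=
    fun _ hY _ hu => comp_eq_zero_of_isPseudokernel_of_isPrecover hk hg hc.1 hY hu
  have hcsc := comp_comp_eq_self_of_factorization hf.1 hcφ hs hker
  obtain ⟨Q', i, p, hip, hpi⟩ := IsIdempotentComplete.idempotents_split Q (s ≫ c)
    (by rw [Category.assoc, hcsc])
  refine ⟨Q', i ≫ φ, isCoreflection_comp_of_split ((hcφ ▸ hf).of_comp hQ) (hsum hQ ⟨i, p, hip⟩)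
    hip (by rw [hpi, Category.assoc, hcφ, hs]) fun Y hY t ht => ?_⟩
  rw [hpi, ← Category.assoc]
  exact hker hY _ (by rw [Category.assoc, hs, ht])

end Preadditive

end

theorem coreflective_characterization_general
    {C : Type u} [Category.{v} C] [Preadditive C]
    (hpk : HasPseudokernels C) (hpc : HasPseudocokernels C)
    (B : C → Prop) (hiso : ClosedUnderIso B) :
    (IsCoreflectiveSub B →
      Precovering B ∧ ClosedUnderSummands B ∧
        ∀ ⦃X Y : C⦄, B X → B Y → ∀ f : X ⟶ Y,
          ∃ (Q : C) (c : Y ⟶ Q), B Q ∧ IsPseudocokernel f c) ∧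
    (IsIdempotentComplete C →
      (Precovering B ∧ ClosedUnderSummands B ∧
        ∀ ⦃X Y : C⦄, B X → B Y → ∀ f : X ⟶ Y,
          ∃ (Q : C) (c : Y ⟶ Q), B Q ∧ IsPseudocokernel f c) →
      IsCoreflectiveSub B) := by
  simp only [isCoreflectiveSub_iff_forall_exists_isCoreflection]
  refine ⟨fun hcor => ⟨fun A => ?_, closedUnderSummands_of_forall_exists_isCoreflection hiso hcor,
    fun X Y hX hY f => ?_⟩, fun _ ⟨hpre, hsum, hpcB⟩ =>
      exists_isCoreflection_of_precovering hpk hpre hsum hpcB⟩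
  · obtain ⟨X, f, hf⟩ := hcor A
    exact ⟨X, f, hf.isPrecover⟩
  · obtain ⟨Q₀, c₀, hc₀⟩ := hpc f
    obtain ⟨Q, ε, hε⟩ := hcor Q₀
    obtain ⟨c, hc⟩ := (hε.2 hY c₀).exists
    exact ⟨Q, c, hε.1, hε.isPseudocokernel_lift hX hc₀ hc⟩

/-- Theorem 3.1: characterization of coreflective subcategories of an additive
category with pseudokernels and pseudocokernels. -/
theorem coreflective_characterization
    {C : Type u} [Category.{v} C] [Preadditive C] [HasFiniteBiproducts C]
    (hpk : HasPseudokernels C) (hpc : HasPseudocokernels C)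
    (B : C → Prop) (hiso : ClosedUnderIso B) :
    (IsCoreflectiveSub B →
      Precovering B ∧ ClosedUnderSummands B ∧
        ∀ ⦃X Y : C⦄, B X → B Y → ∀ f : X ⟶ Y,
          ∃ (Q : C) (c : Y ⟶ Q), B Q ∧ IsPseudocokernel f c) ∧
    (IsIdempotentComplete C →
      (Precovering B ∧ ClosedUnderSummands B ∧
        ∀ ⦃X Y : C⦄, B X → B Y → ∀ f : X ⟶ Y,
          ∃ (Q : C) (c : Y ⟶ Q), B Q ∧ IsPseudocokernel f c) →
      IsCoreflectiveSub B) :=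
  coreflective_characterization_general hpk hpc B hiso

end PaperStmt
end

section
/- Let C be an additive category in which every morphism has a pseudokernel and a pseudocokernel, and let B be a full subcategory of C. If B is reflective, then B is preenveloping, closed under taking direct summands, and every morphism between objects of B has a pseudokernel in C that belongs to B. Conversely, if moreover C has split idempotents, then any full subcategory B that is preenveloping, closed under taking direct summands, and such that every morphism between objects of B has a pseudokernel in C belonging to B, is reflective. -/
open CategoryTheory Limits

universe w v u

/-!
Uniqueness of factorizations makes the reflection of a retract of an object of `B` invertible,
and lets one replace a pseudokernel by its reflection.

Conversely, let `f : A ⟶ X` be a `B`-preenvelope. Composing a pseudocokernel of `f` with a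
preenvelope gives a morphism out of `X` through which every morphism `X ⟶ B` vanishing on `f`
factors; a pseudokernel `k : K ⟶ X` of it lying in `B` therefore lifts `f = f' ≫ k` and kills
all those morphisms. Writing `f' = f ≫ p`, the endomorphism `p ≫ k` of `X` is idempotent, fixes
`f` and kills them too; the preenvelope of `A` into its image, a summand of `X`, then has the
cancellation property `f ≫ h = 0 → h = 0` against `B`, which in an additive category makes
factorizations unique.
-/

namespace PaperStmt

variable {C : Type u} [Category.{v} C] {B : C → Prop}

def IsReflection (B : C → Prop) {A X : C} (f : A ⟶ X) : Prop :=
  B X ∧ ∀ ⦃Y : C⦄, B Y → ∀ g : A ⟶ Y, ∃! h : X ⟶ Y, f ≫ h = g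

lemma IsReflection.isPreenvelope {A X : C} {f : A ⟶ X} (hf : IsReflection B f) :
    IsPreenvelope B f :=
  ⟨hf.1, fun _ hY g => (hf.2 hY g).exists⟩

lemma isReflectiveSub_iff_forall_exists_isReflection :
    IsReflectiveSub B ↔ ∀ A : C, ∃ (X : C) (f : A ⟶ X), IsReflection B f := by
  constructor
  · intro h A
    obtain ⟨L, ⟨adj⟩⟩ := h.exists_leftAdjoint
    refine ⟨(L.obj A).obj, adj.unit.app A, (L.obj A).property, fun Y hY g => ?_⟩
    let E := (ObjectProperty.fullyFaithfulι B).homEquiv.symm.trans (adj.homEquiv A ⟨Y, hY⟩)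
    have hE : ∀ t, E t = adj.unit.app A ≫ t := fun t => adj.homEquiv_unit _ _ _
    have := E.bijective.existsUnique g
    simp only [hE] at this
    exact this
  · intro h
    have (A : C) : HasInitial (StructuredArrow A (ObjectProperty.ι B)) := by
      obtain ⟨X, f, hX, hf⟩ := h A
      let lift (Z : StructuredArrow A (ObjectProperty.ι B)) := hf Z.right.2 Z.hom
      refine IsInitial.hasInitial (X := StructuredArrow.mk (T := ObjectProperty.ι B)
        (Y := ObjectProperty.FullSubcategory.mk X hX) f) <|
        IsInitial.ofUniqueHom (fun Z => StructuredArrow.homMk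
          (ObjectProperty.homMk (lift Z).choose) (by simpa using (lift Z).choose_spec.1)) ?_
      intro Z m
      refine StructuredArrow.hom_ext _ _ (ObjectProperty.hom_ext _ ?_)
      exact (lift Z).choose_spec.2 m.right.hom (by simpa using StructuredArrow.w m)
    exact isRightAdjointOfStructuredArrowInitials _

lemma IsReflection.isIso_of_retract {X Y Z : C} {η : Y ⟶ Z} (hη : IsReflection B η) (hX : B X)
    {s : Y ⟶ X} {r : X ⟶ Y} (hsr : s ≫ r = 𝟙 Y) : IsIso η := by
  obtain ⟨t, ht, -⟩ := hη.2 hX s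
  have hinv : η ≫ t ≫ r = 𝟙 Y := by rw [← Category.assoc, ht, hsr]
  refine ⟨t ≫ r, hinv, (hη.2 hη.1 η).unique ?_ (Category.comp_id η)⟩
  rw [← Category.assoc, hinv, Category.id_comp]

lemma closedUnderSummands_of_forall_exists_isReflection (hiso : ClosedUnderIso B)
    (h : ∀ A : C, ∃ (X : C) (f : A ⟶ X), IsReflection B f) : ClosedUnderSummands B := by
  rintro X Y hX ⟨s, r, hsr⟩
  obtain ⟨Z, η, hη⟩ := h Y
  have := hη.isIso_of_retract hX hsr
  exact hiso (asIso η).symm hη.1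

section HasZeroMorphisms

variable [HasZeroMorphisms C]

lemma IsPseudokernel.of_isReflection_comp {K R X Y : C} {f : X ⟶ Y} {η : K ⟶ R} {k : R ⟶ X}
    (hk : IsPseudokernel f (η ≫ k)) (hη : IsReflection B η) (hY : B Y) :
    IsPseudokernel f k := by
  refine ⟨(hη.2 hY 0).unique (by simpa using hk.1) comp_zero, fun K' k' hk' => ?_⟩
  obtain ⟨t, rfl⟩ := hk.2 k' hk'
  exact ⟨t ≫ η, Category.assoc _ _ _⟩

lemma exists_isPseudokernel_mem_of_forall_exists_isReflection (hpk : HasPseudokernels C)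
    (h : ∀ A : C, ∃ (X : C) (f : A ⟶ X), IsReflection B f) ⦃X Y : C⦄ (hX : B X) (hY : B Y)
    (f : X ⟶ Y) : ∃ (K : C) (k : K ⟶ X), B K ∧ IsPseudokernel f k := by
  obtain ⟨K, k, hk⟩ := hpk f
  obtain ⟨R, η, hη⟩ := h K
  obtain ⟨k', rfl, -⟩ := hη.2 hX k
  exact ⟨R, k', hη.1, hk.of_isReflection_comp hη hY⟩

def AnnihilatorLE (B : C → Prop) {A W X : C} (f : A ⟶ X) (m : W ⟶ X) : Prop :=
  ∀ ⦃Y : C⦄, B Y → ∀ v : X ⟶ Y, f ≫ v = 0 → m ≫ v = 0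

lemma exists_factorization_annihilatorLE (hpc : HasPseudocokernels C) (henv : Preenveloping B)
    (hker : ∀ ⦃X Y : C⦄, B X → B Y → ∀ f : X ⟶ Y, ∃ (K : C) (k : K ⟶ X), B K ∧ IsPseudokernel f k)
    {A X : C} (hX : B X) (f : A ⟶ X) :
    ∃ (K : C) (f' : A ⟶ K) (k : K ⟶ X), B K ∧ f' ≫ k = f ∧ AnnihilatorLE B f k := by
  obtain ⟨Q, c, hc⟩ := hpc f
  obtain ⟨X₁, e, he⟩ := henv Q
  obtain ⟨K, k, hK, hk⟩ := hker hX he.1 (c ≫ e)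
  obtain ⟨f', hf'⟩ := hk.2 f (by rw [← Category.assoc, hc.1, zero_comp])
  refine ⟨K, f', k, hK, hf', fun Y hY v hv => ?_⟩
  obtain ⟨w, rfl⟩ := hc.2 v hv
  obtain ⟨w', rfl⟩ := he.2 hY w
  rw [← Category.assoc c, ← Category.assoc, hk.1, zero_comp]

end HasZeroMorphisms

section Preadditive

variable [Preadditive C]

lemma IsPreenvelope.isReflection_of_cancel_zero {A X : C} {f : A ⟶ X} (hf : IsPreenvelope B f)
    (hcancel : ∀ ⦃Y : C⦄, B Y → ∀ h : X ⟶ Y, f ≫ h = 0 → h = 0) : IsReflection B f := by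
  refine ⟨hf.1, fun Y hY g => ?_⟩
  obtain ⟨h, rfl⟩ := hf.2 hY g
  refine ⟨h, rfl, fun h' hh' => sub_eq_zero.1 (hcancel hY _ ?_)⟩
  rw [Preadditive.comp_sub, hh', sub_self]

lemma IsPreenvelope.exists_idempotent {A X K : C} {f : A ⟶ X} (hf : IsPreenvelope B f) (hK : B K)
    {f' : A ⟶ K} {k : K ⟶ X} (hfk : f' ≫ k = f) (hk : AnnihilatorLE B f k) :
    ∃ ε : X ⟶ X, ε ≫ ε = ε ∧ f ≫ ε = f ∧ AnnihilatorLE B f ε := by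
  obtain ⟨p, hp⟩ := hf.2 hK f'
  have hfpk : f ≫ p ≫ k = f := by rw [← Category.assoc, hp, hfk]
  have hkpk : k ≫ p ≫ k = k := by
    have := hk hf.1 (𝟙 X - p ≫ k) (by rw [Preadditive.comp_sub, hfpk, Category.comp_id, sub_self])
    rwa [Preadditive.comp_sub, Category.comp_id, sub_eq_zero, eq_comm] at this
  refine ⟨p ≫ k, by rw [Category.assoc, hkpk], hfpk, fun Y hY v hv => ?_⟩
  rw [Category.assoc, hk hY v hv, comp_zero]

lemma IsPreenvelope.isReflection_comp_of_retract {A X R : C} {f : A ⟶ X} (hf : IsPreenvelope B f)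
    {q : X ⟶ R} {i : R ⟶ X} (hiq : i ≫ q = 𝟙 R) (hR : B R) (hfqi : f ≫ q ≫ i = f)
    (hqi : AnnihilatorLE B f (q ≫ i)) : IsReflection B (f ≫ q) := by
  refine IsPreenvelope.isReflection_of_cancel_zero ⟨hR, fun Y hY g => ?_⟩ fun Y hY h hh => ?_
  · obtain ⟨v, rfl⟩ := hf.2 hY g
    exact ⟨i ≫ v, by rw [Category.assoc, reassoc_of% hfqi]⟩
  · have hqh : q ≫ h = 0 := by
      simpa [← Category.assoc q i, reassoc_of% hiq] using
        hqi hY (q ≫ h) (by rwa [← Category.assoc])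
    rw [← Category.id_comp h, ← hiq, Category.assoc, hqh, comp_zero]

lemma exists_isReflection_of_preenveloping (hpc : HasPseudocokernels C)
    (hic : IsIdempotentComplete C) (henv : Preenveloping B) (hsum : ClosedUnderSummands B)
    (hker : ∀ ⦃X Y : C⦄, B X → B Y → ∀ f : X ⟶ Y, ∃ (K : C) (k : K ⟶ X), B K ∧ IsPseudokernel f k)
    (A : C) : ∃ (R : C) (r : A ⟶ R), IsReflection B r := by
  obtain ⟨X, f, hf⟩ := henv A
  obtain ⟨K, f', k, hK, hfk, hk⟩ := exists_factorization_annihilatorLE hpc henv hker hf.1 f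
  obtain ⟨ε, hε, hfε, hεf⟩ := hf.exists_idempotent hK hfk hk
  obtain ⟨R, i, q, hiq, hqi⟩ := hic.idempotents_split X ε hε
  refine ⟨R, f ≫ q, hf.isReflection_comp_of_retract hiq (hsum hf.1 ⟨i, q, hiq⟩) ?_ ?_⟩ <;>
    rwa [hqi]

end Preadditive

theorem reflective_characterization_general
    {C : Type u} [Category.{v} C] [Preadditive C]
    (hpk : HasPseudokernels C) (hpc : HasPseudocokernels C)
    (B : C → Prop) (hiso : ClosedUnderIso B) :
    (IsReflectiveSub B →
      Preenveloping B ∧ ClosedUnderSummands B ∧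
        ∀ ⦃X Y : C⦄, B X → B Y → ∀ f : X ⟶ Y,
          ∃ (K : C) (k : K ⟶ X), B K ∧ IsPseudokernel f k) ∧
    (IsIdempotentComplete C →
      (Preenveloping B ∧ ClosedUnderSummands B ∧
        ∀ ⦃X Y : C⦄, B X → B Y → ∀ f : X ⟶ Y,
          ∃ (K : C) (k : K ⟶ X), B K ∧ IsPseudokernel f k) →
      IsReflectiveSub B) := by
  simp only [isReflectiveSub_iff_forall_exists_isReflection]
  refine ⟨fun h => ⟨fun A => ?_, closedUnderSummands_of_forall_exists_isReflection hiso h,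
    exists_isPseudokernel_mem_of_forall_exists_isReflection hpk h⟩,
    fun hic ⟨henv, hsum, hker⟩ => exists_isReflection_of_preenveloping hpc hic henv hsum hker⟩
  obtain ⟨X, f, hf⟩ := h A
  exact ⟨X, f, hf.isPreenvelope⟩

/-- Theorem 3.2: characterization of reflective subcategories of an additive
category with pseudokernels and pseudocokernels. -/
theorem reflective_characterization
    {C : Type u} [Category.{v} C] [Preadditive C] [HasFiniteBiproducts C]
    (hpk : HasPseudokernels C) (hpc : HasPseudocokernels C)
    (B : C → Prop) (hiso : ClosedUnderIso B) :
    (IsReflectiveSub B →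
      Preenveloping B ∧ ClosedUnderSummands B ∧
        ∀ ⦃X Y : C⦄, B X → B Y → ∀ f : X ⟶ Y,
          ∃ (K : C) (k : K ⟶ X), B K ∧ IsPseudokernel f k) ∧
    (IsIdempotentComplete C →
      (Preenveloping B ∧ ClosedUnderSummands B ∧
        ∀ ⦃X Y : C⦄, B X → B Y → ∀ f : X ⟶ Y,
          ∃ (K : C) (k : K ⟶ X), B K ∧ IsPseudokernel f k) →
      IsReflectiveSub B) :=
  reflective_characterization_general hpk hpc B hiso

end PaperStmt
end

section
/- Let C be an additive category and let f : (A, e) → (B, e') be a morphism in the idempotent completion (Karoubi envelope) of C. (1) If c : K → A is a pseudokernel of the underlying morphism f : A → B in C, then e ∘ c : (K, 1_K) → (A, e) is a pseudokernel of f in the Karoubi envelope; consequently, C has pseudokernels if and only if the Karoubi envelope of C has pseudokernels. (2) If c : B → K' is a pseudocokernel of f in C, then c ∘ e' : (B, e') → (K', 1_{K'}) is a pseudocokernel of f in the Karoubi envelope; consequently, C has pseudocokernels if and only if the Karoubi envelope of C has pseudocokernels. -/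
open CategoryTheory Limits

universe w v u

/-!
A factorisation `t ≫ c = k'.f` through a pseudokernel in `C` becomes the factorisation
`(K'.p ≫ t) ≫ (c ≫ P.p) = k'` in the Karoubi envelope, because morphisms there absorb the
idempotents at both ends. Conversely, test morphisms of `C` embed into the envelope via
`toKaroubi`, so taking underlying morphisms turns a pseudokernel of `(toKaroubi C).map f` into
one of `f`. Pseudocokernels are dual.
-/

namespace PaperStmt

open CategoryTheory.Idempotents

section

variable {C : Type u} [Category.{v} C] [Preadditive C]

theorem IsPseudokernel.karoubi {P Q : Karoubi C} {f : P ⟶ Q} {K : C} {c : K ⟶ P.X}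
    (hc : IsPseudokernel f.f c) {g : (toKaroubi C).obj K ⟶ P} (hg : g.f = c ≫ P.p) :
    IsPseudokernel f g := by
  obtain ⟨hc_zero, hc_lift⟩ := hc
  refine ⟨?_, fun K' k' hk' => ?_⟩
  · rw [Karoubi.hom_eq_zero_iff, Karoubi.comp_f, hg, Category.assoc, Karoubi.p_comp, hc_zero]
  · obtain ⟨t, ht⟩ := hc_lift k'.f (Karoubi.hom_eq_zero_iff.mp hk')
    refine ⟨⟨K'.p ≫ t, by simp⟩, Karoubi.hom_ext _ _ ?_⟩
    simp [hg, reassoc_of% ht]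

theorem IsPseudocokernel.karoubi {P Q : Karoubi C} {f : P ⟶ Q} {K' : C} {c : Q.X ⟶ K'}
    (hc : IsPseudocokernel f.f c) {g : Q ⟶ (toKaroubi C).obj K'} (hg : g.f = Q.p ≫ c) :
    IsPseudocokernel f g := by
  obtain ⟨hc_zero, hc_desc⟩ := hc
  refine ⟨?_, fun Q' c' hc' => ?_⟩
  · rw [Karoubi.hom_eq_zero_iff, Karoubi.comp_f, hg, ← Category.assoc, Karoubi.comp_p, hc_zero]
  · obtain ⟨t, ht⟩ := hc_desc c'.f (Karoubi.hom_eq_zero_iff.mp hc')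
    refine ⟨⟨t ≫ Q'.p, by simp⟩, Karoubi.hom_ext _ _ ?_⟩
    simp [hg, reassoc_of% ht]

theorem IsPseudokernel.of_toKaroubi_map {X Y : C} {f : X ⟶ Y} {K : Karoubi C}
    {k : K ⟶ (toKaroubi C).obj X} (hk : IsPseudokernel ((toKaroubi C).map f) k) :
    IsPseudokernel f k.f := by
  obtain ⟨hk_zero, hk_lift⟩ := hk
  refine ⟨Karoubi.hom_eq_zero_iff.mp hk_zero, fun K' k' hk' => ?_⟩
  obtain ⟨t, ht⟩ := hk_lift ((toKaroubi C).map k')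
    (by rw [← Functor.map_comp, hk', Functor.map_zero])
  exact ⟨t.f, congrArg Karoubi.Hom.f ht⟩

theorem IsPseudocokernel.of_toKaroubi_map {X Y : C} {f : X ⟶ Y} {Q : Karoubi C}
    {c : (toKaroubi C).obj Y ⟶ Q} (hc : IsPseudocokernel ((toKaroubi C).map f) c) :
    IsPseudocokernel f c.f := by
  obtain ⟨hc_zero, hc_desc⟩ := hc
  refine ⟨Karoubi.hom_eq_zero_iff.mp hc_zero, fun Q' c' hc' => ?_⟩
  obtain ⟨t, ht⟩ := hc_desc ((toKaroubi C).map c')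
    (by rw [← Functor.map_comp, hc', Functor.map_zero])
  exact ⟨t.f, congrArg Karoubi.Hom.f ht⟩

theorem hasPseudokernels_iff_karoubi : HasPseudokernels C ↔ HasPseudokernels (Karoubi C) := by
  refine ⟨fun h P Q f => ?_, fun h X Y f => ?_⟩
  · obtain ⟨K, c, hc⟩ := h f.f
    exact ⟨_, (toKaroubi C).map c ≫ P.decompId_p, hc.karoubi rfl⟩
  · obtain ⟨K, k, hk⟩ := h ((toKaroubi C).map f)
    exact ⟨K.X, k.f, hk.of_toKaroubi_map⟩

theorem hasPseudocokernels_iff_karoubi :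
    HasPseudocokernels C ↔ HasPseudocokernels (Karoubi C) := by
  refine ⟨fun h P Q f => ?_, fun h X Y f => ?_⟩
  · obtain ⟨K', c, hc⟩ := h f.f
    exact ⟨_, Q.decompId_i ≫ (toKaroubi C).map c, hc.karoubi rfl⟩
  · obtain ⟨Q, c, hc⟩ := h ((toKaroubi C).map f)
    exact ⟨Q.X, c.f, hc.of_toKaroubi_map⟩

end

/-- Lemma 3.4: pseudokernels and pseudocokernels in the idempotent completion
(Karoubi envelope). -/
theorem karoubi_pseudokernels_pseudocokernels
    {C : Type u} [Category.{v} C] [Preadditive C] :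
    (∀ (P Q : Karoubi C) (f : P ⟶ Q) (K : C) (c : K ⟶ P.X),
        IsPseudokernel f.f c →
        ∀ g : (toKaroubi C).obj K ⟶ P, g.f = c ≫ P.p → IsPseudokernel f g) ∧
    (HasPseudokernels C ↔ HasPseudokernels (Karoubi C)) ∧
    (∀ (P Q : Karoubi C) (f : P ⟶ Q) (K' : C) (c : Q.X ⟶ K'),
        IsPseudocokernel f.f c →
        ∀ g : Q ⟶ (toKaroubi C).obj K', g.f = Q.p ≫ c → IsPseudocokernel f g) ∧
    (HasPseudocokernels C ↔ HasPseudocokernels (Karoubi C)) :=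
  ⟨fun _ _ _ _ _ hc _ hg => hc.karoubi hg, hasPseudokernels_iff_karoubi,
    fun _ _ _ _ _ hc _ hg => hc.karoubi hg, hasPseudocokernels_iff_karoubi⟩

end PaperStmt
end

section
/- Let A be an AB3 abelian category and let B be a full additive coreflective subcategory of A. Then B (which is preabelian) is an abelian category if and only if for every morphism f : B → B' between objects of B, the canonical morphism B/tr_B(Ker f) → Im f induced by f is a B-coreflection, where tr_B(Ker f) denotes the trace of B in Ker f, i.e. the image of any B-precover of Ker f. -/
open CategoryTheory Limits

universe w v u

/-!
Write `ι` for the inclusion of `B`. Since `ι` is a left adjoint, cokernels in `B` are computed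
in `A`, while the kernel of `f` in `B` is the `B`-coreflection of `Ker f`. Consequently the
coimage of `f` in `B` is the cokernel of a `B`-precover of `Ker f`, i.e. `B/tr_B(Ker f)`, and the
image of `f` in `B` is the `B`-coreflection of `Im f`. Under these identifications the
coimage-image comparison of `f` in `B` is the factorisation of the canonical morphism
`B/tr_B(Ker f) → Im f` through the coreflection of `Im f`, so it is an isomorphism exactly when
that morphism is itself a coreflection. Finally, `B` is preadditive with finite limits and
colimits, hence abelian iff all these comparisons are isomorphisms.
-/

namespace PaperStmt

section Coreflection

variable {C : Type*} [Category C] {B : C → Prop}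

theorem IsCoreflection.isPrecover_s8 {X M : C} {j : X ⟶ M} (hj : IsCoreflection B j) :
    IsPrecover B j :=
  ⟨hj.1, fun _ hY g => (hj.2 hY g).exists⟩

theorem IsCoreflection.hom_ext_s8 {W M Y : C} {j : W ⟶ M} (hj : IsCoreflection B j) (hY : B Y)
    {a b : Y ⟶ W} (h : a ≫ j = b ≫ j) : a = b :=
  (hj.2 hY (b ≫ j)).unique h rfl

theorem IsCoreflection.isCoreflection_comp_iff_isIso {V W M : C} {j : W ⟶ M}
    (hj : IsCoreflection B j) (hV : B V) (t : V ⟶ W) :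
    IsCoreflection B (t ≫ j) ↔ IsIso t := by
  constructor
  · intro htj
    obtain ⟨s, hs, -⟩ := htj.2 hj.1 j
    refine ⟨s, htj.hom_ext_s8 hV ?_, hj.hom_ext_s8 hj.1 ?_⟩
    · simp only [Category.assoc, hs, Category.id_comp]
    · simpa using hs
  · intro ht
    refine ⟨hV, fun Y hY g => ?_⟩
    obtain ⟨h, hh, -⟩ := hj.2 hY g
    refine ⟨h ≫ inv t, by simpa using hh, fun h' hh' => ?_⟩
    rw [IsIso.eq_comp_inv]
    exact hj.hom_ext_s8 hY (by rw [Category.assoc, hh', hh])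

theorem IsCoreflectiveSub.nonempty_coreflective (hcor : IsCoreflectiveSub B) :
    Nonempty (Coreflective (ObjectProperty.ι B)) :=
  have : (ObjectProperty.ι B).IsLeftAdjoint := hcor
  ⟨{ R := (ObjectProperty.ι B).rightAdjoint
     adj := Adjunction.ofIsLeftAdjoint _ }⟩

end Coreflection

section Cokernels

variable {C : Type*} [Category C] [HasZeroMorphisms C]

@[simps]
noncomputable def cokernelIsoOfCompEqZeroIff {U V X : C} {u : U ⟶ X} {v : V ⟶ X}
    [HasCokernel u] [HasCokernel v]
    (h : ∀ ⦃Z : C⦄ (t : X ⟶ Z), u ≫ t = 0 ↔ v ≫ t = 0) :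
    cokernel u ≅ cokernel v where
  hom := cokernel.desc u (cokernel.π v) ((h _).2 (cokernel.condition v))
  inv := cokernel.desc v (cokernel.π u) ((h _).1 (cokernel.condition u))

end Cokernels

/-- `h` may carry its own preadditive structure; its zero morphisms agree with ours anyway. -/
theorem isIso_coimageImageComparison_of_abelian {D : Type*} [Category D] [HasZeroMorphisms D]
    [HasKernels D] [HasCokernels D] (h : Abelian D) {X Y : D} (f : X ⟶ Y) :
    IsIso (Abelian.coimageImageComparison f) := by
  obtain rfl : ‹HasZeroMorphisms D› = Preadditive.preadditiveHasZeroMorphisms :=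
    Subsingleton.elim _ _
  exact Abelian.instIsIsoCoimageImageComparison f

theorem imageι_comp_factorThruImage_eq_zero {C : Type*} [Category C] [Abelian C] {K X Y : C}
    {k : K ⟶ X} {f : X ⟶ Y} (w : k ≫ f = 0) : image.ι k ≫ factorThruImage f = 0 := by
  rw [← cancel_epi (factorThruImage k), ← cancel_mono (image.ι f)]
  simpa using w

section Coreflective

variable {C : Type*} [Category C] {B : C → Prop} [Coreflective (ObjectProperty.ι B)]

theorem isCoreflection_coreflectorAdjunction_counit_app (M : C) :
    IsCoreflection B ((coreflectorAdjunction (ObjectProperty.ι B)).counit.app M) := by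
  let adj := coreflectorAdjunction (ObjectProperty.ι B)
  refine ⟨((coreflector (ObjectProperty.ι B)).obj M).property, fun Y hY g => ?_⟩
  let Y' : ObjectProperty.FullSubcategory B := ⟨Y, hY⟩
  have hcounit : ∀ h : Y' ⟶ (coreflector _).obj M,
      h.hom ≫ adj.counit.app M = (adj.homEquiv Y' M).symm h :=
    fun h => (adj.homEquiv_counit Y' M h).symm
  refine ⟨(adj.homEquiv Y' M g).hom, ?_, fun h hh => ?_⟩
  · change _ ≫ adj.counit.app M = g
    rw [hcounit, Equiv.symm_apply_apply]
  · change (ObjectProperty.homMk h : Y' ⟶ _).hom = _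
    rw [← (adj.homEquiv Y' M).apply_symm_apply (ObjectProperty.homMk h), ← hcounit]
    exact congrArg (fun k => (adj.homEquiv Y' M k).hom) hh

end Coreflective

section Abelian

variable {A : Type*} [Category A] [Abelian A] {B : A → Prop} [Coreflective (ObjectProperty.ι B)]

instance : HasFiniteLimits (ObjectProperty.FullSubcategory B) :=
  ⟨fun _ _ _ => hasLimitsOfShape_of_coreflective (ObjectProperty.ι B)⟩

instance : HasFiniteColimits (ObjectProperty.FullSubcategory B) :=
  ⟨fun _ _ _ => hasColimitsOfShape_of_coreflective (ObjectProperty.ι B)⟩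

theorem exists_isCoreflection_comp_imageι_eq {X Y : ObjectProperty.FullSubcategory B}
    (f : X ⟶ Y) :
    ∃ j : (Abelian.image f).obj ⟶ Limits.image f.hom,
      IsCoreflection B j ∧ j ≫ Limits.image.ι f.hom = (Abelian.image.ι f).hom := by
  have hιπ : (Abelian.image.ι f).hom ≫ cokernel.π f.hom = 0 := by
    change (ObjectProperty.ι B).map (Abelian.image.ι f) ≫
      cokernel.π ((ObjectProperty.ι B).map f) = 0
    rw [← PreservesCokernel.π_iso_hom (ObjectProperty.ι B) f, ← Category.assoc,
      ← Functor.map_comp, kernel.condition, Functor.map_zero, zero_comp]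
  let j := kernel.lift _ _ hιπ ≫ (Abelian.imageIsoImage f.hom).hom
  have hj : j ≫ Limits.image.ι f.hom = (Abelian.image.ι f).hom := by
    rw [Category.assoc, Abelian.imageIsoImage_hom_comp_image_ι, kernel.lift_ι]
  have himage : Limits.image.ι f.hom ≫ (cokernel.π f).hom = 0 := by
    rw [← cancel_epi (factorThruImage f.hom), image.fac_assoc, comp_zero,
      ← ObjectProperty.FullSubcategory.comp_hom, cokernel.condition, ObjectProperty.zero_hom]
  refine ⟨j, ⟨(Abelian.image f).property, fun V hV g => ?_⟩, hj⟩
  let gB : (⟨V, hV⟩ : ObjectProperty.FullSubcategory B) ⟶ Y :=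
    ObjectProperty.homMk (g ≫ Limits.image.ι f.hom)
  have hgB : gB ≫ cokernel.π f = 0 := by ext; simp [gB, himage]
  refine ⟨(kernel.lift _ gB hgB).hom, ?_, fun h hh => ?_⟩
  · change _ ≫ j = g
    rw [← cancel_mono (Limits.image.ι f.hom), Category.assoc, hj]
    exact congrArg (·.hom) (kernel.lift_ι _ gB hgB)
  · have : ObjectProperty.homMk h = kernel.lift _ gB hgB := by
      rw [← cancel_mono (kernel.ι (cokernel.π f)), kernel.lift_ι]
      ext
      simp [gB, ← hh, ← hj]
    exact congrArg (·.hom) this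

theorem imageι_comp_eq_zero_iff_kernelι_comp_eq_zero {X Y : ObjectProperty.FullSubcategory B}
    (f : X ⟶ Y) {P : A} {p : P ⟶ kernel f.hom} (hp : IsPrecover B p) {Z : A} (t : X.obj ⟶ Z) :
    image.ι (p ≫ kernel.ι f.hom) ≫ t = 0 ↔ (kernel.ι f).hom ≫ t = 0 := by
  set kp := p ≫ kernel.ι f.hom
  have hkp : (ObjectProperty.homMk kp : ⟨P, hp.1⟩ ⟶ X) ≫ f = 0 := by ext; simp [kp]
  have hkp_fac : (kernel.lift f _ hkp).hom ≫ (kernel.ι f).hom = kp := by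
    rw [← ObjectProperty.FullSubcategory.comp_hom, kernel.lift_ι]; rfl
  obtain ⟨a, ha⟩ := hp.2 (kernel f).property (kernel.lift f.hom (kernel.ι f).hom (by
    rw [← ObjectProperty.FullSubcategory.comp_hom, kernel.condition, ObjectProperty.zero_hom]))
  have hι_fac : a ≫ kp = (kernel.ι f).hom := by simp [kp, reassoc_of% ha]
  constructor
  · intro ht
    rw [← hι_fac, Category.assoc, ← image.fac kp, Category.assoc, ht, comp_zero, comp_zero]
  · intro ht
    rw [← cancel_epi (factorThruImage kp), image.fac_assoc, ← hkp_fac, Category.assoc, ht,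
      comp_zero, comp_zero]

theorem exists_cokernel_imageι_iso_coimage {X Y : ObjectProperty.FullSubcategory B}
    (f : X ⟶ Y) {P : A} {p : P ⟶ kernel f.hom} (hp : IsPrecover B p) :
    ∃ e : cokernel (image.ι (p ≫ kernel.ι f.hom)) ≅ (Abelian.coimage f).obj,
      cokernel.π _ ≫ e.hom = (Abelian.coimage.π f).hom :=
  ⟨cokernelIsoOfCompEqZeroIff
      (fun _ => imageι_comp_eq_zero_iff_kernelι_comp_eq_zero f hp) ≪≫
    (PreservesCokernel.iso (ObjectProperty.ι B) (kernel.ι f)).symm, by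
    rw [Iso.trans_hom, Iso.symm_hom, cokernelIsoOfCompEqZeroIff_hom, cokernel.π_desc_assoc,
      Iso.comp_inv_eq]
    exact (PreservesCokernel.π_iso_hom (ObjectProperty.ι B) (kernel.ι f)).symm⟩

theorem isIso_coimageImageComparison_iff_isCoreflection (hiso : ClosedUnderIso B)
    {X Y : ObjectProperty.FullSubcategory B} (f : X ⟶ Y) {P : A} {p : P ⟶ kernel f.hom}
    (hp : IsPrecover B p) (φ : cokernel (image.ι (p ≫ kernel.ι f.hom)) ⟶ image f.hom)
    (hφ : cokernel.π _ ≫ φ = factorThruImage f.hom) :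
    IsIso (Abelian.coimageImageComparison f) ↔ IsCoreflection B φ := by
  obtain ⟨e, he⟩ := exists_cokernel_imageι_iso_coimage f hp
  obtain ⟨j, hj, hjι⟩ := exists_isCoreflection_comp_imageι_eq f
  have hφ_eq : φ = (e.hom ≫ (Abelian.coimageImageComparison f).hom) ≫ j := by
    rw [← cancel_epi (cokernel.π _), ← cancel_mono (Limits.image.ι f.hom), hφ, image.fac]
    simp only [Category.assoc, hjι, reassoc_of% he]
    simp only [← ObjectProperty.FullSubcategory.comp_hom, Abelian.coimage_image_factorisation]
  rw [hφ_eq, hj.isCoreflection_comp_iff_isIso (hiso e.symm (Abelian.coimage f).property),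
    isIso_comp_left_iff]
  exact (isIso_iff_of_reflects_iso _ (ObjectProperty.ι B)).symm

end Abelian

theorem coreflective_abelian_iff_general
    {A : Type u} [Category.{v} A] [Abelian A]
    (B : A → Prop) (hiso : ClosedUnderIso B)
    (hcor : IsCoreflectiveSub B) :
    Nonempty (Abelian (ObjectProperty.FullSubcategory B)) ↔
      ∀ (X Y : A), B X → B Y → ∀ (f : X ⟶ Y) (P : A) (p : P ⟶ kernel f),
        IsPrecover B p →
        ∀ φ : cokernel (image.ι (p ≫ kernel.ι f)) ⟶ image f,
          cokernel.π (image.ι (p ≫ kernel.ι f)) ≫ φ = factorThruImage f →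
          IsCoreflection B φ := by
  obtain ⟨_⟩ := hcor.nonempty_coreflective
  constructor
  · rintro ⟨h⟩ X Y hX hY f P p hp φ hφ
    let fB : (⟨X, hX⟩ : ObjectProperty.FullSubcategory B) ⟶ ⟨Y, hY⟩ :=
      ObjectProperty.homMk f
    exact (isIso_coimageImageComparison_iff_isCoreflection hiso fB hp φ hφ).1
      (isIso_coimageImageComparison_of_abelian h fB)
  · intro h
    have : ∀ {X Y : ObjectProperty.FullSubcategory B} (f : X ⟶ Y),
        IsIso (Abelian.coimageImageComparison f) := by
      intro X Y f
      obtain ⟨P, p, hp⟩ : ∃ (P : A) (p : P ⟶ kernel f.hom), IsPrecover B p :=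
        ⟨_, _, (isCoreflection_coreflectorAdjunction_counit_app (kernel f.hom)).isPrecover_s8⟩
      have hφ := cokernel.π_desc _ _ (imageι_comp_factorThruImage_eq_zero
        (k := p ≫ kernel.ι f.hom) (by rw [Category.assoc, kernel.condition, comp_zero]))
      exact (isIso_coimageImageComparison_iff_isCoreflection hiso f hp _ hφ).2
        (h _ _ X.property Y.property _ _ _ hp _ hφ)
    exact ⟨Abelian.ofCoimageImageComparisonIsIso⟩

/-- Theorem 7.5: a full additive coreflective subcategory `B` of an AB3 abelian
category is abelian iff for each morphism `f` of `B`, the canonical morphism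
`B/tr_B(Ker f) → Im f` is a `B`-coreflection bijection; here `tr_B(Ker f)` is the image of any
`B`-precover of `Ker f`, and the canonical morphism is the unique `φ` with
`cokernel.π ≫ φ = factorThruImage f`. -/
theorem coreflective_abelian_iff
    {A : Type u} [Category.{v} A] [Abelian A] [HasColimits A]
    (B : A → Prop) (hiso : ClosedUnderIso B)
    (hzero : ∃ Z : A, IsZero Z ∧ B Z)
    (hsum : ∀ ⦃X Y : A⦄, B X → B Y → B (X ⊞ Y))
    (hcor : IsCoreflectiveSub B) :
    Nonempty (Abelian (ObjectProperty.FullSubcategory B)) ↔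
      ∀ (X Y : A), B X → B Y → ∀ (f : X ⟶ Y) (P : A) (p : P ⟶ kernel f),
        IsPrecover B p →
        ∀ φ : cokernel (image.ι (p ≫ kernel.ι f)) ⟶ image f,
          cokernel.π (image.ι (p ≫ kernel.ι f)) ≫ φ = factorThruImage f →
          IsCoreflection B φ :=
  coreflective_abelian_iff_general B hiso hcor

end PaperStmt
end

section
/- Let A be an AB3 abelian category and let U be a set of objects of A. For every object A of A, the composed morphism Û_A/tr_U(Ker ε_A) ↠ Û_A/Ker ε_A ↪ A (induced by the canonical morphism ε_A : Û_A → A) is a Pres(U)-precover of A. In particular, Pres(U) is a precovering subcategory of A. -/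
open CategoryTheory Limits

universe w v u

namespace PaperStmt

variable {A : Type u} [Category.{v} A] [Abelian A] [HasColimits A] {ι : Type v}

/-- An object belongs to `Sum(U)`: it is (isomorphic to) a coproduct of objects of
the family `S`. -/
def InSum (S : ι → A) (M : A) : Prop :=
  ∃ (J : Type v) (u : J → ι), Nonempty (M ≅ ∐ fun j => S (u j))

/-- An object belongs to `Gen(U)`: it is an epimorphic image of a coproduct of objects
of the family `S`. -/
def InGen (S : ι → A) (M : A) : Prop :=
  ∃ (J : Type v) (u : J → ι) (π : (∐ fun j => S (u j)) ⟶ M), Epi π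

/-- An object belongs to `Pres(U)`: it is isomorphic to the cokernel of a morphism between
coproducts of objects of the family `S`. -/
def InPres (S : ι → A) (M : A) : Prop :=
  ∃ (J K : Type v) (u : J → ι) (w : K → ι)
    (φ : (∐ fun j => S (u j)) ⟶ (∐ fun k => S (w k))),
    Nonempty (M ≅ cokernel φ)

/-- The canonical object `Û_M = ∐_{U ∈ U} U^(Hom(U,M))`. -/
noncomputable def Uhat (S : ι → A) (M : A) : A :=
  ∐ fun p : (Σ i : ι, (S i ⟶ M)) => S p.1

/-- The canonical morphism `ε_M : Û_M ⟶ M`. -/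
noncomputable def eps (S : ι → A) (M : A) : Uhat S M ⟶ M :=
  Sigma.desc fun p => p.2

/-- The object `tr_U(M)`, i.e. the image of `ε_M`, realizing the trace of `U` in `M`. -/
noncomputable abbrev trObj (S : ι → A) (M : A) : A := image (eps S M)

/-- The inclusion `tr_U(M) ⟶ M`. -/
noncomputable abbrev trIota (S : ι → A) (M : A) : trObj S M ⟶ M := image.ι (eps S M)

/-- The inclusion `tr_U(Ker f) ⟶ X` of the trace of the kernel of `f : X ⟶ Y`. -/
noncomputable def trKerIota (S : ι → A) {X Y : A} (f : X ⟶ Y) :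
    trObj S (kernel f) ⟶ X :=
  trIota S (kernel f) ≫ kernel.ι f

lemma trKerIota_comp (S : ι → A) {X Y : A} (f : X ⟶ Y) : trKerIota S f ≫ f = 0 := by
  simp [trKerIota]

lemma trKerIota_comp_factorThruImage (S : ι → A) {X Y : A} (f : X ⟶ Y) :
    trKerIota S f ≫ factorThruImage f = 0 := by
  rw [← cancel_mono (image.ι f)]
  simp [trKerIota]

/-- The canonical morphism `X/tr_U(Ker f) ⟶ Im f` induced by `f : X ⟶ Y`. -/
noncomputable def coimToIm (S : ι → A) {X Y : A} (f : X ⟶ Y) :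
    cokernel (trKerIota S f) ⟶ image f :=
  cokernel.desc _ (factorThruImage f) (trKerIota_comp_factorThruImage S f)

/-- The canonical morphism `Û_M/tr_U(Ker ε_M) ⟶ M`, which is a `Pres(U)`-precover. -/
noncomputable def presPrecover (S : ι → A) (M : A) :
    cokernel (trKerIota S (eps S M)) ⟶ M :=
  cokernel.desc _ (eps S M) (trKerIota_comp S (eps S M))

/-- The quotient `Ker ε_M / tr_U(Ker ε_M)`. -/
noncomputable def kerModTr (S : ι → A) (M : A) : A :=
  cokernel (trIota S (kernel (eps S M)))

/-- The canonical monomorphism `Ker ε_M / tr_U(Ker ε_M) ⟶ Û_M / tr_U(Ker ε_M)`. -/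
noncomputable def kerModTrToQ (S : ι → A) (M : A) :
    kerModTr S M ⟶ cokernel (trKerIota S (eps S M)) :=
  cokernel.map _ _ (𝟙 _) (kernel.ι (eps S M)) (by simp [trKerIota])

/-- The inclusion of `tr²_U(Ker ε_M)/tr_U(Ker ε_M) = tr_U(Ker ε_M / tr_U(Ker ε_M))` into
`Û_M / tr_U(Ker ε_M)`. -/
noncomputable def tr2Incl (S : ι → A) (M : A) :
    trObj S (kerModTr S M) ⟶ cokernel (trKerIota S (eps S M)) :=
  trIota S (kerModTr S M) ≫ kerModTrToQ S M

/-- The quotient `Û_M / tr²_U(Ker ε_M)`. -/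
noncomputable def UhatModTr2 (S : ι → A) (M : A) : A :=
  cokernel (tr2Incl S M)

/-- The quotient `Ker ε_M / tr²_U(Ker ε_M)`. -/
noncomputable def kerModTr2 (S : ι → A) (M : A) : A :=
  cokernel (trIota S (kerModTr S M))

end PaperStmt

/-!
`Û_M / tr_U(Ker ε_M)` is the cokernel of `Û_{Ker ε_M} → Ker ε_M ↪ Û_M`, a morphism between
coproducts of members of `U`, so it lies in `Pres(U)`. Given `g : coker φ → M` with `φ` a
morphism of coproducts of members of `U`, the composite `∐ → coker φ → M` lifts along `ε_M`
to `ψ : ∐ → Û_M`. Then `φ ≫ ψ` lands in `Ker ε_M`, and being a morphism out of a coproduct of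
members of `U` it lands in `tr_U(Ker ε_M)`; hence `ψ` descends to
`coker φ → Û_M / tr_U(Ker ε_M)`, which lifts `g`.
-/

namespace PaperStmt

section Lift

variable {A : Type u} [Category.{v} A] [HasColimits A] {ι : Type v} (S : ι → A)

noncomputable def uhatLift {J : Type v} (u : J → ι) {M : A} (f : (∐ fun j => S (u j)) ⟶ M) :
    (∐ fun j => S (u j)) ⟶ Uhat S M :=
  Sigma.desc fun j =>
    Sigma.ι (fun p : Σ i : ι, (S i ⟶ M) => S p.1) ⟨u j, Sigma.ι (fun j => S (u j)) j ≫ f⟩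

lemma uhatLift_comp_eps {J : Type v} (u : J → ι) {M : A} (f : (∐ fun j => S (u j)) ⟶ M) :
    uhatLift S u f ≫ eps S M = f := by
  ext j
  erw [Sigma.ι_desc_assoc, Sigma.ι_desc]

end Lift

section Abelian

variable {A : Type u} [Category.{v} A] [Abelian A] [HasColimits A] {ι : Type v} (S : ι → A)

lemma exists_comp_trKerIota_eq {J : Type v} {u : J → ι} {X Y : A} (g : X ⟶ Y)
    (f : (∐ fun j => S (u j)) ⟶ X) (hf : f ≫ g = 0) :
    ∃ t, t ≫ trKerIota S g = f :=
  ⟨uhatLift S u (kernel.lift g f hf) ≫ factorThruImage _, by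
    simp [trKerIota, reassoc_of% uhatLift_comp_eps]⟩

lemma inPres_cokernel_trKerIota {J : Type v} (u : J → ι) {Y : A}
    (f : (∐ fun j => S (u j)) ⟶ Y) : InPres S (cokernel (trKerIota S f)) := by
  have hfac : eps S (kernel f) ≫ kernel.ι f =
      factorThruImage (eps S (kernel f)) ≫ trKerIota S f := by
    simp [trKerIota]
  exact ⟨_, J, Sigma.fst, u, _,
    ⟨(cokernelEpiComp _ _).symm ≪≫ (cokernelIsoOfEq hfac).symm⟩⟩

lemma exists_comp_presPrecover_eq {J K : Type v} {u : J → ι} {w : K → ι}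
    (φ : (∐ fun j => S (u j)) ⟶ (∐ fun k => S (w k))) {M : A} (g : cokernel φ ⟶ M) :
    ∃ h, h ≫ presPrecover S M = g := by
  set ψ := uhatLift S w (cokernel.π φ ≫ g)
  have hψ : ψ ≫ eps S M = cokernel.π φ ≫ g := uhatLift_comp_eps S w _
  obtain ⟨t, ht⟩ := exists_comp_trKerIota_eq S (eps S M) (φ ≫ ψ) (by simp [hψ])
  have hφψ : φ ≫ ψ ≫ cokernel.π (trKerIota S (eps S M)) = 0 := by
    rw [← Category.assoc, ← ht, Category.assoc, cokernel.condition, comp_zero]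
  refine ⟨cokernel.desc φ (ψ ≫ cokernel.π _) hφψ, ?_⟩
  rw [← cancel_epi (cokernel.π φ)]
  simp [presPrecover, hψ]

lemma isPrecover_presPrecover (M : A) : IsPrecover (InPres S) (presPrecover S M) := by
  refine ⟨inPres_cokernel_trKerIota S Sigma.fst (eps S M), ?_⟩
  rintro Y ⟨J, K, u, w, φ, ⟨e⟩⟩ g
  obtain ⟨h, hh⟩ := exists_comp_presPrecover_eq S φ (e.inv ≫ g)
  exact ⟨e.hom ≫ h, by simp [hh]⟩

end Abelian

/-- Lemma 8.4: for every object `M`, the canonical morphism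
`Û_M/tr_U(Ker ε_M) ⟶ M` induced by `ε_M` is a `Pres(U)`-precover of `M`; in particular,
`Pres(U)` is a precovering subcategory of `A`. -/
theorem presPrecover_isPrecover
    {A : Type u} [Category.{v} A] [Abelian A] [HasColimits A]
    {ι : Type v} (S : ι → A) :
    (∀ M : A, IsPrecover (InPres S) (presPrecover S M)) ∧ Precovering (InPres S) :=
  ⟨isPrecover_presPrecover S, fun M => ⟨_, _, isPrecover_presPrecover S M⟩⟩

end PaperStmt
end

section
/- Let U be a set of objects of an AB3 abelian category A and set B = Pres(U). A morphism p : B_A → A with B_A in B is a B-coreflection if and only if Hom(U, p) : Hom(U, B_A) → Hom(U, A) is a bijection for every U ∈ U. In particular, a morphism f : B → B' between objects of B is an isomorphism if and only if Hom(U, f) is a bijection for every U ∈ U. -/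
open CategoryTheory Limits

universe w v u

/-!
The maps `g ↦ g ≫ p` out of `Y` are bijective for a class of objects `Y` closed under coproducts,
isomorphisms and cokernels of morphisms between its members, so bijectivity for each `U ∈ U`
propagates to all of `Pres(U)`, which is the coreflection property. A coreflection whose target
already lies in the subcategory is an isomorphism.
-/

namespace PaperStmt

section HomBijective

variable {C : Type*} [Category* C] {X M : C} (p : X ⟶ M)

lemma bijective_comp_of_isIso [IsIso p] {Y : C} :
    Function.Bijective (fun g : Y ⟶ X => g ≫ p) :=
  (asIso p).homToEquiv.bijective

lemma bijective_comp_of_iso {Y Y' : C} (e : Y ≅ Y')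
    (h : Function.Bijective (fun g : Y' ⟶ X => g ≫ p)) :
    Function.Bijective (fun g : Y ⟶ X => g ≫ p) := by
  have hfactor : (fun g : Y ⟶ X => g ≫ p) =
      e.homFromEquiv.symm ∘ (fun g : Y' ⟶ X => g ≫ p) ∘ e.homFromEquiv := by
    funext g
    simp
  rw [hfactor]
  exact e.homFromEquiv.symm.bijective.comp (h.comp e.homFromEquiv.bijective)

lemma bijective_comp_sigma {J : Type*} (Y : J → C) [HasCoproduct Y]
    (h : ∀ j, Function.Bijective (fun g : Y j ⟶ X => g ≫ p)) :
    Function.Bijective (fun g : ∐ Y ⟶ X => g ≫ p) := by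
  choose lift hlift using fun j (g : ∐ Y ⟶ M) => (h j).2 (Sigma.ι Y j ≫ g)
  refine ⟨fun g₁ g₂ hg => Sigma.hom_ext _ _ fun j => (h j).1 ?_,
    fun g => ⟨Sigma.desc (lift · g), ?_⟩⟩
  · simpa using Sigma.ι Y j ≫= hg
  · ext j
    simpa using hlift j g

lemma bijective_comp_cokernel [HasZeroMorphisms C] {Y Z : C} (φ : Y ⟶ Z) [HasCokernel φ]
    (hY : Function.Injective (fun g : Y ⟶ X => g ≫ p))
    (hZ : Function.Bijective (fun g : Z ⟶ X => g ≫ p)) :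
    Function.Bijective (fun g : cokernel φ ⟶ X => g ≫ p) := by
  refine ⟨fun g₁ g₂ hg => coequalizer.hom_ext (hZ.1 ?_), fun g => ?_⟩
  · simpa using cokernel.π φ ≫= hg
  obtain ⟨g', hg'⟩ := hZ.2 (cokernel.π φ ≫ g)
  have hφ : φ ≫ g' = 0 := hY (by simpa using φ ≫= hg')
  exact ⟨cokernel.desc φ g' hφ, coequalizer.hom_ext (by simpa using hg')⟩

end HomBijective

lemma IsCoreflection.isIso {C : Type*} [Category* C] {B : C → Prop} {X Y : C} {f : X ⟶ Y}
    (hf : IsCoreflection B f) (hY : B Y) : IsIso f := by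
  obtain ⟨s, hs, -⟩ := hf.2 hY (𝟙 Y)
  obtain ⟨_, -, hunique⟩ := hf.2 hf.1 f
  have hfs : f ≫ s = 𝟙 X :=
    (hunique _ (by simp [hs])).trans (hunique _ (Category.id_comp f)).symm
  exact ⟨s, hfs, hs⟩

lemma isCoreflection_iff_bijective {C : Type*} [Category* C] (B : C → Prop) {X M : C}
    (p : X ⟶ M) :
    IsCoreflection B p ↔
      B X ∧ ∀ ⦃Y : C⦄, B Y → Function.Bijective (fun g : Y ⟶ X => g ≫ p) := by
  simp only [IsCoreflection, Function.bijective_iff_existsUnique]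

section Pres

variable {A : Type u} [Category.{v} A] [Abelian A] [HasColimits A] {ι : Type v} (S : ι → A)

lemma inPres_obj (i : ι) : InPres S (S i) :=
  ⟨PEmpty, PUnit, PEmpty.elim, fun _ => i, 0,
    ⟨(coproductUniqueIso fun _ : PUnit => S i).symm ≪≫ cokernelZeroIsoTarget.symm⟩⟩

lemma bijective_comp_of_inPres {X M : A} (p : X ⟶ M)
    (h : ∀ i, Function.Bijective (fun g : S i ⟶ X => g ≫ p)) {Y : A} (hY : InPres S Y) :
    Function.Bijective (fun g : Y ⟶ X => g ≫ p) := by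
  obtain ⟨J, K, u, w, φ, ⟨e⟩⟩ := hY
  refine bijective_comp_of_iso p e (bijective_comp_cokernel p φ ?_ ?_)
  · exact (bijective_comp_sigma p _ fun j => h (u j)).1
  · exact bijective_comp_sigma p _ fun k => h (w k)

lemma isCoreflection_inPres_iff {X M : A} (hX : InPres S X) (p : X ⟶ M) :
    IsCoreflection (InPres S) p ↔ ∀ i, Function.Bijective (fun g : S i ⟶ X => g ≫ p) := by
  rw [isCoreflection_iff_bijective]
  exact ⟨fun h i => h.2 (inPres_obj S i),
    fun h => ⟨hX, fun _ => bijective_comp_of_inPres S p h⟩⟩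

end Pres

/-- Lemma 8.5: a morphism `p : B_A ⟶ A` with `B_A ∈ Pres(U)` is a
`Pres(U)`-coreflection iff `Hom(U, p)` is bijective for every `U ∈ U`; in particular, a
morphism in `Pres(U)` is an isomorphism iff `Hom(U, f)` is bijective for every `U ∈ U`. -/
theorem pres_coreflection_iff_hom_bijective
    {A : Type u} [Category.{v} A] [Abelian A] [HasColimits A]
    {ι : Type v} (S : ι → A) :
    (∀ (BA M : A), InPres S BA → ∀ p : BA ⟶ M,
      (IsCoreflection (InPres S) p ↔
        ∀ i : ι, Function.Bijective (fun g : S i ⟶ BA => g ≫ p))) ∧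
    (∀ (X Y : A), InPres S X → InPres S Y → ∀ f : X ⟶ Y,
      (IsIso f ↔ ∀ i : ι, Function.Bijective (fun g : S i ⟶ X => g ≫ f))) := by
  refine ⟨fun _ _ hBA p => isCoreflection_inPres_iff S hBA p, fun X Y hX hY f => ?_⟩
  refine ⟨fun _ _ => bijective_comp_of_isIso f, fun h => ?_⟩
  exact ((isCoreflection_inPres_iff S hX f).2 h).isIso hY

end PaperStmt
end
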